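/- If T ∈ B_{A^{1/2}}(H), then both the A-spectrum σ_A(T) and the A-approximate point spectrum σ_{A,app}(T) are compact subsets of ℂ. -/

import Mathlib

open Filter Topology ContinuousLinearMap

variable {H : Type*} [NormedAddCommGroup H] [InnerProductSpace ℂ H] [CompleteSpace H]

/-- The `A`-seminorm `‖x‖_A = ⟨Ax,x⟩^{1/2}`. -/
noncomputable def anorm (A : H →L[ℂ] H) (x : H) : ℝ :=
  Real.sqrt (inner ℂ (A x) x : ℂ).re

/-- `B_{A^{1/2}}(H)`: the `A`-bounded operators. -/
def MemBAhalf (A T : H →L[ℂ] H) : Prop :=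
  ∃ d > 0, ∀ ξ : H, anorm A (T ξ) ≤ d * anorm A ξ

/-- `B_A(H)`: operators admitting an `A`-adjoint. -/
def MemBA (A T : H →L[ℂ] H) : Prop :=
  Set.range (fun x => ContinuousLinearMap.adjoint T (A x)) ⊆ Set.range A

/-- A-invertibility in `B_{A^{1/2}}(H)`. -/
def AInvertibleHalf (A T : H →L[ℂ] H) : Prop :=
  ∃ S : H →L[ℂ] H, S ≠ 0 ∧ MemBAhalf A S ∧ A ∘L T ∘L S = A ∧ A ∘L S ∘L T = A

/-- A-invertibility in `B_A(H)`. -/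
def AInvertibleBA (A T : H →L[ℂ] H) : Prop :=
  ∃ S : H →L[ℂ] H, S ≠ 0 ∧ MemBA A S ∧ A ∘L T ∘L S = A ∧ A ∘L S ∘L T = A

/-- The `A`-approximate point spectrum. -/
def sigmaAapp (A T : H →L[ℂ] H) : Set ℂ :=
  {lam | ∃ x : ℕ → H, (∀ n, anorm A (x n) = 1) ∧
    Tendsto (fun n => anorm A (T (x n) - lam • x n)) atTop (nhds 0)}

/-- The `A`-spectrum. -/
def sigmaA (A T : H →L[ℂ] H) : Set ℂ :=
  {lam | ¬ AInvertibleHalf A (lam • (1 : H →L[ℂ] H) - T)}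

/-- The `A`-numerical range. -/
def WA (A T : H →L[ℂ] H) : Set ℂ :=
  {z | ∃ x : H, anorm A x = 1 ∧ z = (inner ℂ (A (T x)) x : ℂ)}

/-- The `A`-operator seminorm, sup over the closure of the range of `A`. -/
noncomputable def AopnormCl (A T : H →L[ℂ] H) : ℝ :=
  sSup {r | ∃ ξ ∈ closure (Set.range A), anorm A ξ ≤ 1 ∧ r = anorm A (T ξ)}

/-- The `A`-operator seminorm, sup over all vectors of `A`-seminorm at most one. -/
noncomputable def Aopnorm (A T : H →L[ℂ] H) : ℝ :=
  sSup {r | ∃ ξ : H, anorm A ξ ≤ 1 ∧ r = anorm A (T ξ)}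

/-- The `A`-numerical radius. -/
noncomputable def wA (A T : H →L[ℂ] H) : ℝ :=
  sSup {r | ∃ x : H, anorm A x = 1 ∧ r = ‖(inner ℂ (A (T x)) x : ℂ)‖}

/-- The `A`-reduced minimum modulus. -/
noncomputable def gammaA (A T : H →L[ℂ] H) : ℝ :=
  sInf {r | ∃ ξ : H, (∀ y : H, anorm A (T y) = 0 → (inner ℂ (A ξ) y : ℂ) = 0) ∧
    anorm A ξ = 1 ∧ r = anorm A (T ξ)}

/-- closure of the range of `A` as a submodule. -/
noncomputable def rangeClosure (A : H →L[ℂ] H) : Submodule ℂ H :=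
  (LinearMap.range (A : H →ₗ[ℂ] H)).topologicalClosure

noncomputable instance (A : H →L[ℂ] H) : CompleteSpace (rangeClosure A) :=
  (Submodule.isClosed_topologicalClosure _).completeSpace_coe

/-- orthogonal projection onto the closure of the range of `A`, as an operator on `H`. -/
noncomputable def Pcl (A : H →L[ℂ] H) : H →L[ℂ] H :=
  (rangeClosure A).subtypeL ∘L (rangeClosure A).orthogonalProjection

set_option linter.unusedSectionVars false

/-! The resolvent set is stable under perturbations `B ↦ B - E` for which `1 - S E` is invertible
(`S` an `A`-inverse of `B`): then `(1 - S E)⁻¹ S` is an `A`-inverse of `B - E`, and it stays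
`A`-bounded because `Z = (1 - S E)⁻¹` satisfies `Z = 1 + S E Z`. Taking `E` a small multiple of the
identity shows that `ρ_A(T)` is open; taking `B = λ` and `E = T` shows that it contains all large
`λ`. Finally `σ_{A,app}(T)` is closed and lies in `σ_A(T)`, since an `A`-inverse `S` of `λ - T`
gives `‖x‖_A ≤ c ‖(λ - T) x‖_A`. -/

section ASeminorm

variable {A : H →L[ℂ] H}

lemma anorm_nonneg (x : H) : 0 ≤ anorm A x := Real.sqrt_nonneg _

lemma sqrt_apply_sqrt_apply (hA : A.IsPositive) (x : H) : CFC.sqrt A (CFC.sqrt A x) = A x := by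
  rw [← mul_apply_eq_comp, CFC.sqrt_mul_sqrt_self A ((nonneg_iff_isPositive A).2 hA)]

lemma anorm_eq_norm_sqrt (hA : A.IsPositive) (x : H) : anorm A x = ‖CFC.sqrt A x‖ := by
  have hR : (CFC.sqrt A).IsPositive := (nonneg_iff_isPositive _).1 (CFC.sqrt_nonneg A)
  rw [anorm, ← sqrt_apply_sqrt_apply hA, hR.inner_left_eq_inner_right,
    ← RCLike.re_eq_complex_re, inner_self_eq_norm_sq, Real.sqrt_sq (norm_nonneg _)]

lemma anorm_add_le (hA : A.IsPositive) (x y : H) : anorm A (x + y) ≤ anorm A x + anorm A y := by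
  simp only [anorm_eq_norm_sqrt hA, map_add]
  exact norm_add_le _ _

lemma anorm_smul (hA : A.IsPositive) (a : ℂ) (x : H) : anorm A (a • x) = ‖a‖ * anorm A x := by
  simp only [anorm_eq_norm_sqrt hA, map_smul, norm_smul]

lemma anorm_neg (hA : A.IsPositive) (x : H) : anorm A (-x) = anorm A x := by
  simp only [anorm_eq_norm_sqrt hA, map_neg, norm_neg]

lemma anorm_eq_zero_iff (hA : A.IsPositive) (x : H) : anorm A x = 0 ↔ A x = 0 := by
  constructor
  · intro h
    rw [anorm_eq_norm_sqrt hA, norm_eq_zero] at h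
    rw [← sqrt_apply_sqrt_apply hA, h, map_zero]
  · intro h
    rw [anorm, h, inner_zero_left, Complex.zero_re, Real.sqrt_zero]

lemma anorm_congr (hA : A.IsPositive) {x y : H} (h : A x = A y) : anorm A x = anorm A y := by
  have hxy : anorm A (x - y) = 0 := (anorm_eq_zero_iff hA _).2 (by rw [map_sub, h, sub_self])
  rw [anorm_eq_norm_sqrt hA, norm_eq_zero, map_sub, sub_eq_zero] at hxy
  rw [anorm_eq_norm_sqrt hA, anorm_eq_norm_sqrt hA, hxy]

end ASeminorm

def ABoundedBy (A T : H →L[ℂ] H) (c : ℝ) : Prop :=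
  ∀ ξ : H, anorm A (T ξ) ≤ c * anorm A ξ

namespace ABoundedBy

variable {A S T : H →L[ℂ] H} {c d : ℝ}

lemma memBAhalf (hT : ABoundedBy A T c) : MemBAhalf A T :=
  ⟨max c 1, by positivity, fun ξ =>
    (hT ξ).trans (mul_le_mul_of_nonneg_right (le_max_left c 1) (anorm_nonneg ξ))⟩

lemma mul (hS : ABoundedBy A S c) (hT : ABoundedBy A T d) (hc : 0 ≤ c) :
    ABoundedBy A (S * T) (c * d) := fun ξ =>
  calc anorm A (S (T ξ)) ≤ c * anorm A (T ξ) := hS _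
    _ ≤ c * (d * anorm A ξ) := mul_le_mul_of_nonneg_left (hT ξ) hc
    _ = c * d * anorm A ξ := (mul_assoc _ _ _).symm

lemma apply_eq_apply (hA : A.IsPositive) (hT : ABoundedBy A T c) {x y : H} (h : A x = A y) :
    A (T x) = A (T y) := by
  have hxy : anorm A (x - y) = 0 := (anorm_eq_zero_iff hA _).2 (by rw [map_sub, h, sub_self])
  have hT0 : anorm A (T (x - y)) = 0 :=
    le_antisymm (by simpa [hxy] using hT (x - y)) (anorm_nonneg _)
  rwa [anorm_eq_zero_iff hA, map_sub, map_sub, sub_eq_zero] at hT0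

lemma of_one_sub_mul_eq_one (hA : A.IsPositive) {Y Z : H →L[ℂ] H} {k : ℝ}
    (hY : ABoundedBy A Y k) (hk : k < 1) (hZ : (1 - Y) * Z = 1) :
    ABoundedBy A Z (1 - k)⁻¹ := by
  intro ξ
  have hZξ : Z ξ = ξ + Y (Z ξ) := by
    have := DFunLike.congr_fun hZ ξ
    simp only [mul_apply_eq_comp, sub_apply, one_apply_eq_self] at this
    exact sub_eq_iff_eq_add.1 this
  have : (1 - k) * anorm A (Z ξ) ≤ anorm A ξ := by
    have h := (anorm_add_le hA ξ (Y (Z ξ))).trans (add_le_add_right (hY (Z ξ)) _)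
    rw [← hZξ] at h
    linarith
  rw [inv_mul_eq_div, le_div_iff₀ (sub_pos.2 hk), mul_comm]
  exact this

end ABoundedBy

lemma aBoundedBy_smul_one {A : H →L[ℂ] H} (hA : A.IsPositive) (a : ℂ) :
    ABoundedBy A (a • 1) ‖a‖ := fun ξ => (anorm_smul hA a ξ).le

theorem aInvertibleHalf_sub_of_isUnit_one_sub_mul {A B S E : H →L[ℂ] H} {c e : ℝ}
    (hA : A.IsPositive) (hA0 : A ≠ 0) (hBS : A ∘L B ∘L S = A) (hSB : A ∘L S ∘L B = A)
    (hS : ABoundedBy A S c) (hE : ABoundedBy A E e) (hc : 0 ≤ c) (hce : c * e < 1)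
    (hu : IsUnit (1 - S * E)) :
    AInvertibleHalf A (B - E) := by
  set Z : H →L[ℂ] H := ↑hu.unit⁻¹
  have hZl : (1 - S * E) * Z = 1 := hu.mul_val_inv
  have hZr : Z * (1 - S * E) = 1 := hu.val_inv_mul
  have hZ : ABoundedBy A Z (1 - c * e)⁻¹ := (hS.mul hE hc).of_one_sub_mul_eq_one hA hce hZl
  have hZS : Z * S = S * (1 + E * (Z * S)) := by
    have : Z = 1 + S * E * Z := by
      calc Z = (1 - S * E) * Z + S * E * Z := by noncomm_ring
        _ = 1 + S * E * Z := by rw [hZl]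
    conv_lhs => rw [this]
    noncomm_ring
  have hright : A * ((B - E) * (Z * S)) = A := by
    have hBS' : A * B * S = A := by rw [mul_assoc]; exact hBS
    calc A * ((B - E) * (Z * S)) = A * ((B - E) * (S * (1 + E * (Z * S)))) := by rw [← hZS]
      _ = A * B * S * (1 + E * (Z * S)) - A * E * (S * (1 + E * (Z * S))) := by noncomm_ring
      _ = A := by rw [hBS', ← hZS]; noncomm_ring
  -- `S B - 1` maps into `ker A`, which the `A`-bounded `Z` preserves.
  have hZSB : A * (Z * (S * B)) = A * Z := by
    ext x
    exact hZ.apply_eq_apply hA (DFunLike.congr_fun hSB x)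
  have hleft : A * (Z * S * (B - E)) = A :=
    calc A * (Z * S * (B - E)) = A * (Z * (S * B)) - A * (Z * (S * E)) := by noncomm_ring
      _ = A * (Z * (1 - S * E)) := by rw [hZSB]; noncomm_ring
      _ = A := by rw [hZr, mul_one]
  refine ⟨Z * S, ?_, (hZ.mul hS (inv_nonneg.2 (sub_nonneg.2 hce.le))).memBAhalf, hright, hleft⟩
  rintro h
  rw [h, mul_zero, mul_zero] at hright
  exact hA0 hright.symm

section Spectra

variable {A : H →L[ℂ] H}

lemma isClosed_sigmaA (hA : A.IsPositive) (hA0 : A ≠ 0) (T : H →L[ℂ] H) :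
    IsClosed (sigmaA A T) := by
  refine isOpen_compl_iff.1 <| isOpen_iff_mem_nhds.2 fun lam₀ hlam₀ => ?_
  obtain ⟨S, -, ⟨c, hc, hS⟩, hBS, hSB⟩ := not_not.1 hlam₀
  have hsmall : Tendsto (fun lam => ‖lam₀ - lam‖) (𝓝 lam₀) (𝓝 0) := by
    simpa [norm_sub_rev] using tendsto_norm_sub_self lam₀
  filter_upwards [(hsmall.const_mul c).eventually_lt_const (by norm_num : c * 0 < (1 : ℝ)),
    (hsmall.const_mul ‖S‖).eventually_lt_const (by norm_num : ‖S‖ * 0 < (1 : ℝ))] with lam hc' hS'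
  have hsplit : lam • (1 : H →L[ℂ] H) - T = (lam₀ • 1 - T) - (lam₀ - lam) • 1 := by
    rw [sub_smul]; abel
  have hnorm : ‖S * (lam₀ - lam) • (1 : H →L[ℂ] H)‖ < 1 := by
    rwa [mul_smul_comm, mul_one, norm_smul, mul_comm]
  exact not_not.2 (hsplit ▸ aInvertibleHalf_sub_of_isUnit_one_sub_mul hA hA0 hBS hSB hS
    (aBoundedBy_smul_one hA _) hc.le hc' (isUnit_one_sub_of_norm_lt_one hnorm))

lemma isBounded_sigmaA (hA : A.IsPositive) (hA0 : A ≠ 0) {T : H →L[ℂ] H}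
    (hT : MemBAhalf A T) : Bornology.IsBounded (sigmaA A T) := by
  obtain ⟨d, hd, hTd⟩ := hT
  refine (Metric.isBounded_closedBall (x := 0) (r := max ‖T‖ d)).subset fun lam hlam => ?_
  by_contra hfar
  simp only [Metric.mem_closedBall, dist_zero_right, not_le, max_lt_iff] at hfar
  have hlam0 : lam ≠ 0 := norm_pos_iff.1 (hd.trans hfar.2)
  have hBS : A ∘L (lam • (1 : H →L[ℂ] H)) ∘L (lam⁻¹ • 1) = A := by
    ext x; simp [smul_smul, hlam0]
  have hSB : A ∘L (lam⁻¹ • (1 : H →L[ℂ] H)) ∘L (lam • 1) = A := by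
    ext x; simp [smul_smul, hlam0]
  have hce : ‖lam⁻¹‖ * d < 1 := by
    rw [norm_inv, inv_mul_lt_iff₀ (norm_pos_iff.2 hlam0), mul_one]
    exact hfar.2
  have hnorm : ‖lam⁻¹ • (1 : H →L[ℂ] H) * T‖ < 1 := by
    rw [smul_mul_assoc, one_mul, norm_smul, norm_inv, inv_mul_lt_iff₀ (norm_pos_iff.2 hlam0),
      mul_one]
    exact hfar.1
  exact hlam (aInvertibleHalf_sub_of_isUnit_one_sub_mul hA hA0 hBS hSB (aBoundedBy_smul_one hA _)
    hTd (norm_nonneg _) hce (isUnit_one_sub_of_norm_lt_one hnorm))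

lemma mem_sigmaAapp_iff (T : H →L[ℂ] H) (lam : ℂ) : lam ∈ sigmaAapp A T ↔
    ∀ ε > 0, ∃ x, anorm A x = 1 ∧ anorm A (T x - lam • x) < ε := by
  constructor
  · rintro ⟨x, hx, hlim⟩ ε hε
    obtain ⟨n, hn⟩ := (hlim.eventually_lt_const hε).exists
    exact ⟨x n, hx n, hn⟩
  · intro h
    choose x hx hlt using fun n : ℕ => h (1 / (n + 1)) Nat.one_div_pos_of_nat
    exact ⟨x, hx, squeeze_zero (fun n => anorm_nonneg _) (fun n => (hlt n).le)
      tendsto_one_div_add_atTop_nhds_zero_nat⟩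

lemma isClosed_sigmaAapp (hA : A.IsPositive) (T : H →L[ℂ] H) : IsClosed (sigmaAapp A T) := by
  refine isClosed_of_closure_subset fun lam hlam => (mem_sigmaAapp_iff T lam).2 fun ε hε => ?_
  obtain ⟨mu, hmu, hdist⟩ := Metric.mem_closure_iff.1 hlam (ε / 2) (half_pos hε)
  obtain ⟨x, hx, hsmall⟩ := (mem_sigmaAapp_iff T mu).1 hmu (ε / 2) (half_pos hε)
  refine ⟨x, hx, ?_⟩
  calc anorm A (T x - lam • x) = anorm A ((T x - mu • x) + (mu - lam) • x) := by
        rw [sub_smul, sub_add_sub_cancel]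
    _ ≤ anorm A (T x - mu • x) + ‖mu - lam‖ * anorm A x := by
        rw [← anorm_smul hA]; exact anorm_add_le hA _ _
    _ < ε / 2 + ε / 2 := by
        rw [hx, mul_one, ← dist_eq_norm, dist_comm]; exact add_lt_add hsmall hdist
    _ = ε := add_halves ε

lemma sigmaAapp_subset_sigmaA (hA : A.IsPositive) (T : H →L[ℂ] H) :
    sigmaAapp A T ⊆ sigmaA A T := by
  rintro lam ⟨x, hx, hlim⟩ ⟨S, -, ⟨c, -, hS⟩, -, hSB⟩
  have hlower : ∀ n, 1 ≤ c * anorm A (T (x n) - lam • x n) := fun n =>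
    calc 1 = anorm A (S ((lam • 1 - T) (x n))) := by
          rw [← hx n]
          exact (anorm_congr hA (DFunLike.congr_fun hSB (x n))).symm
      _ ≤ c * anorm A ((lam • 1 - T) (x n)) := hS _
      _ = c * anorm A (T (x n) - lam • x n) := by
          rw [← anorm_neg hA]; simp
  have := ge_of_tendsto' (by simpa using hlim.const_mul c) hlower
  norm_num at this

end Spectra

/-- for `T ∈ B_{A^{1/2}}(H)`, both `σ_A(T)` and `σ_{A,app}(T)` are compact. -/
theorem stmt9 (A T : H →L[ℂ] H) (hA : A.IsPositive) (hA0 : A ≠ 0)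
    (hT : MemBAhalf A T) :
    IsCompact (sigmaA A T) ∧ IsCompact (sigmaAapp A T) := by
  have hσ : IsCompact (sigmaA A T) :=
    Metric.isCompact_of_isClosed_isBounded (isClosed_sigmaA hA hA0 T) (isBounded_sigmaA hA hA0 hT)
  exact ⟨hσ, hσ.of_isClosed_subset (isClosed_sigmaAapp hA T) (sigmaAapp_subset_sigmaA hA T)⟩
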